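/- Let K be a field, A and B commutative K-algebras, C a cocommutative K-coalgebra, ψ : C → Hom_K(A,B) a cocommutative coalgebra measuring, M an A-module, N a B-module, D a C-comodule, and φ : D → Hom_K(M,N) a C-comodule measuring from M to N relative to ψ. Let k, l ≥ 0 and let f : {0,1,…,k} → {0,1,…,l} be a map with f(0) = 0. Then for all t ∈ D, m ∈ M and a₁,…,a_k ∈ A: Σ ( φ(t₍₀₎)(m) · ∏_{i ∈ f⁻¹(0), i ≠ 0} ψ(t₍ᵢ₎)(a_i) ) ⊗ ( ∏_{i ∈ f⁻¹(1)} ψ(t₍ᵢ₎)(a_i) ) ⊗ … ⊗ ( ∏_{i ∈ f⁻¹(l)} ψ(t₍ᵢ₎)(a_i) ) = Σ φ(t₍₀₎)( m · ∏_{i ∈ f⁻¹(0), i ≠ 0} a_i ) ⊗ ψ(t₍₁₎)( ∏_{i ∈ f⁻¹(1)} a_i ) ⊗ … ⊗ ψ(t₍ₗ₎)( ∏_{i ∈ f⁻¹(l)} a_i ) as elements of N ⊗ B^{⊗l}, where empty products equal 1, the left-hand sum is over the iterated coefficients t₍₀₎ ⊗ t₍₁₎ ⊗ … ⊗ t₍ₖ₎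 (coaction followed by (k−1)-fold comultiplication on the C-factors), and the right-hand sum over t₍₀₎ ⊗ t₍₁₎ ⊗ … ⊗ t₍ₗ₎ (coaction followed by (l−1)-fold comultiplication). -/

import Mathlib

/-!
Common infrastructure: the skeletal category `Γ` of finite pointed sets, coalgebra
measurings, comodule measurings, iterated comultiplications/coactions, the Sweedler-type
chain-level maps of a measuring, the Loday `Γ`-module data, and higher order Hochschild
homology of a `Γ`-module with respect to a pointed simplicial set (via left Kan extension
along `Γ → Sets_⋆`, followed by the Moore (alternating face map) complex and homology).
-/

open CategoryTheory TensorProduct PiTensorProduct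

/-- A morphism of the skeletal category `Γ` of finite pointed sets, from
`[k] = {0,…,k}` to `[l] = {0,…,l}` (based at `0`). -/
@[ext] structure GammaHom (k l : ℕ) : Type where
  toFun : Fin (k + 1) → Fin (l + 1)
  map_zero : toFun 0 = 0

/-- The identity of `[k]` in `Γ`. -/
def GammaHom.id (k : ℕ) : GammaHom k k := ⟨_root_.id, rfl⟩

/-- Composition in `Γ`. -/
def GammaHom.comp {k l p : ℕ} (g : GammaHom l p) (f : GammaHom k l) : GammaHom k p :=
  ⟨g.toFun ∘ f.toFun, by simp [Function.comp, f.map_zero, g.map_zero]⟩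

/-- The skeletal category `Γ` of finite pointed sets `[k] = {0,1,…,k}` based at `0`. -/
structure GammaCat : Type where
  len : ℕ

instance : Category GammaCat where
  Hom a b := GammaHom a.len b.len
  id a := GammaHom.id a.len
  comp f g := g.comp f
  id_comp _ := rfl
  comp_id _ := rfl
  assoc _ _ _ := rfl

/-- The inclusion `Γ → Sets_⋆` of `Γ` into the category of pointed sets. -/
def gammaToPointed : GammaCat ⥤ Pointed.{0} where
  obj a := ⟨Fin (a.len + 1), 0⟩
  map f := ⟨f.toFun, f.map_zero⟩
  map_id _ := rfl
  map_comp _ _ := rfl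

/-- The fiber `f⁻¹(0) ∖ {0}` of `f : [k] → [l]` over the basepoint, with
`{1,…,k}` identified with `Fin k` via `i ↦ i.succ`. -/
def fiber0 {k l : ℕ} (f : GammaHom k l) : Finset (Fin k) :=
  Finset.univ.filter fun i => f.toFun i.succ = 0

/-- The fiber `f⁻¹(j)` of `f : [k] → [l]` over `j ∈ {1,…,l}`, with
`{1,…,k}` identified with `Fin k` via `i ↦ i.succ`. -/
def fiber {k l : ℕ} (f : GammaHom k l) (j : Fin l) : Finset (Fin k) :=
  Finset.univ.filter fun i => f.toFun i.succ = j.succ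

section Measuring

variable (K A B C : Type) [Field K]
variable [Ring A] [Algebra K A] [Ring B] [Algebra K B]
variable [AddCommGroup C] [Module K C] [Coalgebra K C]

/-- `ψ : C →ₗ[K] Hom_K(A,B)` is a coalgebra measuring from `A` to `B`:
`ψ s (a * a') = Σ ψ s₍₁₎ a * ψ s₍₂₎ a'` (Sweedler sum over `Δ s = Σ s₍₁₎ ⊗ s₍₂₎`)
and `ψ s 1 = ε s • 1`. -/
structure IsMeasuring (ψ : C →ₗ[K] A →ₗ[K] B) : Prop where
  measures_mul : ∀ (s : C) (a a' : A),
    ψ s (a * a') =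
      TensorProduct.lift ((LinearMap.mul K B).compl₁₂ (ψ.flip a) (ψ.flip a'))
        (Coalgebra.comul s)
  measures_one : ∀ s : C, ψ s 1 = Coalgebra.counit (R := K) s • (1 : B)

/-- The coalgebra `C` is cocommutative. -/
def IsCocommutative : Prop :=
  (TensorProduct.comm K C C).toLinearMap ∘ₗ Coalgebra.comul =
    (Coalgebra.comul : C →ₗ[K] C ⊗[K] C)

end Measuring

section Comodule

variable (K C D : Type) [Field K]
variable [AddCommGroup C] [Module K C] [Coalgebra K C]
variable [AddCommGroup D] [Module K D]

/-- A (left) `C`-comodule structure `δ : D → C ⊗ D` on `D`, coassociative and counital. -/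
structure CoactionStruct where
  δ : D →ₗ[K] C ⊗[K] D
  coassoc : (TensorProduct.assoc K C C D).toLinearMap ∘ₗ
      (Coalgebra.comul (R := K) (A := C)).rTensor D ∘ₗ δ = δ.lTensor C ∘ₗ δ
  rTensor_counit_comp_coaction :
    (Coalgebra.counit (R := K) (A := C)).rTensor D ∘ₗ δ = TensorProduct.mk K K D 1

/-- Any coalgebra is a comodule over itself via its comultiplication. -/
def selfCoaction : CoactionStruct K C C where
  δ := Coalgebra.comul
  coassoc := Coalgebra.coassoc
  rTensor_counit_comp_coaction := Coalgebra.rTensor_counit_comp_comul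

/-- Nested tensor powers `C ⊗ (C ⊗ (⋯ ⊗ (C ⊗ D)))` with `k` factors of `C`. -/
noncomputable def TD : ℕ → ModuleCat.{0} K
  | 0 => ModuleCat.of K D
  | (k+1) => ModuleCat.of K (C ⊗[K] TD k)

/-- Iterated comultiplication of the first tensor factor,
`Δ^{(k)} ⊗ id : C ⊗ D → C^{⊗(k+1)} ⊗ D`, where `Δ^{(0)} = id` and
`Δ^{(j)} = (Δ ⊗ id^{⊗(j-1)}) ∘ Δ^{(j-1)}`. -/
noncomputable def comulIterTail : (k : ℕ) → (C ⊗[K] D) →ₗ[K] TD K C D (k+1)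
  | 0 => LinearMap.id
  | (k+1) =>
      (((TensorProduct.assoc K C C (TD K C D k)).toLinearMap ∘ₗ
        (Coalgebra.comul (R := K) (A := C)).rTensor (TD K C D k)) ∘ₗ
        comulIterTail k)

/-- The iterated coaction `D → C^{⊗k} ⊗ D` giving the iterated Sweedler coefficients
`t₍₁₎ ⊗ ⋯ ⊗ t₍ₖ₎ ⊗ t₍₀₎` of `t ∈ D`: the coaction `δ` followed by the `(k-1)`-fold
iterated comultiplication on the `C`-factor. -/
noncomputable def coactIter (ρ : CoactionStruct K C D) : (k : ℕ) → D →ₗ[K] TD K C D k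
  | 0 => LinearMap.id
  | (k+1) => comulIterTail K C D k ∘ₗ ρ.δ

/-- The iterated comultiplication `Δ^{(k-1)} : C → C^{⊗k}` (with `Δ^{(0)} = id`,
`Δ^{(j)} = (Δ ⊗ id^{⊗(j-1)}) ∘ Δ^{(j-1)}`), giving the iterated Sweedler
coefficients `s₍₁₎ ⊗ ⋯ ⊗ s₍ₖ₎` of `s ∈ C`. -/
noncomputable def comulIter : (k : ℕ) → C →ₗ[K] TD K C C k
  | 0 => LinearMap.id
  | (k+1) => comulIterTail K C C k ∘ₗ Coalgebra.comul

end Comodule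

section ComodMeasuring

variable (K A B C D M N : Type) [Field K]
variable [Ring A] [Algebra K A] [Ring B] [Algebra K B]
variable [AddCommGroup C] [Module K C] [Coalgebra K C]
variable [AddCommGroup D] [Module K D]
variable [AddCommGroup M] [Module K M] [Module A M] [IsScalarTower K A M] [SMulCommClass K A M]
variable [AddCommGroup N] [Module K N] [Module B N] [IsScalarTower K B N] [SMulCommClass K B N]

/-- The scalar action of `B` on the `B`-module `N`, as a `K`-bilinear map. -/
def lsmulKB : B →ₗ[K] N →ₗ[K] N :=
  LinearMap.mk₂ K (fun b n => b • n) (fun b b' n => add_smul b b' n)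
    (fun c b n => smul_assoc c b n) (fun b n n' => smul_add b n n')
    (fun c b n => (smul_comm c b n).symm)

/-- `φ : D →ₗ[K] Hom_K(M,N)` is a `C`-comodule measuring from the `A`-module `M` to the
`B`-module `N`, relative to the measuring `ψ` and the coaction `ρ` on `D`:
`φ t (a • m) = Σ ψ t₍₀₎ a • φ t₍₁₎ m` (Sweedler sum over `δ t = Σ t₍₀₎ ⊗ t₍₁₎`). -/
structure IsComodMeasuring (ψ : C →ₗ[K] A →ₗ[K] B) (ρ : CoactionStruct K C D)
    (φ : D →ₗ[K] M →ₗ[K] N) : Prop where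
  measures : ∀ (t : D) (a : A) (m : M),
    φ t (a • m) =
      TensorProduct.lift ((lsmulKB K B N).compl₁₂ (ψ.flip a) (φ.flip m)) (ρ.δ t)

variable (ψ : C →ₗ[K] A →ₗ[K] B) (φ : D →ₗ[K] M →ₗ[K] N)

/-- `c₁ ⊗ (c₂ ⊗ (⋯ ⊗ cₖ₊₁)) ↦ ψ c₁ a₁ * (ψ c₂ a₂ * (⋯ * ψ cₖ₊₁ aₖ₊₁))` : the ordered
product of the values of a measuring on the iterated Sweedler coefficients. -/
noncomputable def prodPair : (k : ℕ) → (Fin (k+1) → A) → (TD K C C k →ₗ[K] B)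
  | 0, a => ψ.flip (a 0)
  | (k+1), a => TensorProduct.lift
      ((LinearMap.mul K B).compl₁₂ (ψ.flip (a 0)) (prodPair k (a ∘ Fin.succ)))

/-- `c₁ ⊗ (⋯ ⊗ (cₖ ⊗ d)) ↦ ψ c₁ a₁ • (ψ c₂ a₂ • (⋯ • φ d m))`. -/
noncomputable def modPair : (k : ℕ) → (Fin k → A) → M → (TD K C D k →ₗ[K] N)
  | 0, _, m => φ.flip m
  | (k+1), a, m => TensorProduct.lift
      ((lsmulKB K B N).compl₁₂ (ψ.flip (a 0)) (modPair k (a ∘ Fin.succ) m))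

/-- Prepending a factor to a tensor power of `B`, as a `K`-bilinear map. -/
noncomputable def tprodCons (k : ℕ) :
    B →ₗ[K] (⨂[K] (_ : Fin k), B) →ₗ[K] (⨂[K] (_ : Fin (k+1)), B) :=
  (PiTensorProduct.lift).toLinearMap ∘ₗ
    (PiTensorProduct.tprod K (s := fun _ : Fin (k+1) => B)).curryLeft

/-- `c₁ ⊗ (⋯ ⊗ (cₖ ⊗ d)) ↦ φ d m ⊗ ψ c₁ a₁ ⊗ ⋯ ⊗ ψ cₖ aₖ` : applied to the iterated
coaction of `t`, this produces the Sweedler-type chain-level expression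
`Σ φ t₍₀₎ m ⊗ ψ t₍₁₎ a₁ ⊗ ⋯ ⊗ ψ t₍ₖ₎ aₖ` of a comodule measuring. -/
noncomputable def measurePair : (k : ℕ) → M → (Fin k → A) →
    (TD K C D k →ₗ[K] N ⊗[K] (⨂[K] (_ : Fin k), B))
  | 0, m, _ =>
      (TensorProduct.mk K N (⨂[K] (_ : Fin 0), B)).flip (tprod K (fun _ : Fin 0 => (1:B)))
        ∘ₗ (φ.flip m)
  | (k+1), m, a => TensorProduct.lift <|
      ((LinearMap.llcomp K (TD K C D k) (N ⊗[K] (⨂[K] (_ : Fin k), B))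
          (N ⊗[K] (⨂[K] (_ : Fin (k+1)), B))).flip (measurePair k m (a ∘ Fin.succ))) ∘ₗ
        ((TensorProduct.mapBilinear (RingHom.id K) N (⨂[K] (_ : Fin k), B) N (⨂[K] (_ : Fin (k+1)), B)
            LinearMap.id) ∘ₗ (tprodCons K B k) ∘ₗ (ψ.flip (a 0)))

end ComodMeasuring

section Loday

variable (K A M : Type) [Field K] [CommRing A] [Algebra K A]
variable [AddCommGroup M] [Module K M] [Module A M] [IsScalarTower K A M] [SMulCommClass K A M]

/-- The `k`-th term `M ⊗ A^{⊗k}` of the Loday `Γ`-module `L(A,M)`. -/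
abbrev Lob (k : ℕ) : Type := M ⊗[K] (⨂[K] (_ : Fin k), A)

/-- The value of the Loday map `L(A,M)(f)` on the pure tensor `m ⊗ a₁ ⊗ ⋯ ⊗ aₖ`, namely
`(m • ∏_{i ∈ f⁻¹(0), i ≠ 0} aᵢ) ⊗ (∏_{i ∈ f⁻¹(1)} aᵢ) ⊗ ⋯ ⊗ (∏_{i ∈ f⁻¹(l)} aᵢ)`
(empty products are `1`). -/
noncomputable def lodayElt {k l : ℕ} (f : GammaHom k l) (m : M) (a : Fin k → A) :
    Lob K A M l :=
  ((∏ i ∈ fiber0 f, a i) • m) ⊗ₜ[K] tprod K (fun j => ∏ i ∈ fiber f j, a i)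

/-- The Loday `Γ`-module `L(A,M) : Γ ⥤ Vect_K`, assembled from a family of linear maps
satisfying the functoriality equations. -/
noncomputable def lodayFunctorOf
    (F : ∀ k l : ℕ, GammaHom k l → (Lob K A M k →ₗ[K] Lob K A M l))
    (hFid : ∀ k, F k k (GammaHom.id k) = LinearMap.id)
    (hFcomp : ∀ (k l p : ℕ) (f : GammaHom k l) (g : GammaHom l p),
      F k p (g.comp f) = (F l p g) ∘ₗ (F k l f)) :
    GammaCat ⥤ ModuleCat.{0} K where
  obj a := ModuleCat.of K (Lob K A M a.len)
  map {a b} f := ModuleCat.ofHom (F a.len b.len f)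
  map_id a := ModuleCat.hom_ext (hFid a.len)
  map_comp {a b c} f g := ModuleCat.hom_ext (hFcomp a.len b.len c.len f g)

end Loday

section HH

variable (K : Type) [Field K]

/-- The simplicial vector space `R̃(Y_•)` associated to a `Γ`-module `R` and a pointed
simplicial set `Y`, where `R̃ : Sets_⋆ ⥤ Vect_K` is the left Kan extension of `R` along
the inclusion `Γ → Sets_⋆`. -/
noncomputable def simplicialExt (L : GammaCat ⥤ ModuleCat.{0} K)
    (Y : SimplexCategoryᵒᵖ ⥤ Pointed.{0}) : SimplicialObject (ModuleCat.{0} K) :=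
  Y ⋙ (gammaToPointed.lan).obj L

/-- The homology `H_n(R̃(Y_•))` of the simplicial vector space `R̃(Y_•)` (computed via the
Moore / alternating face map complex).  For `R = L(A,M)` this is the higher order
Hochschild homology `HH_n^Y(A,M)` of order `Y`. -/
noncomputable def hh (L : GammaCat ⥤ ModuleCat.{0} K)
    (Y : SimplexCategoryᵒᵖ ⥤ Pointed.{0}) (n : ℕ) : ModuleCat.{0} K :=
  ((AlgebraicTopology.alternatingFaceMapComplex (ModuleCat.{0} K)).obj
    (simplicialExt K L Y)).homology n

/-- The map induced on `H_n(R̃(Y_•))` by a morphism of `Γ`-modules `η : R ⟶ R'`. -/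
noncomputable def hhMapOfNat {L L' : GammaCat ⥤ ModuleCat.{0} K} (η : L ⟶ L')
    (Y : SimplexCategoryᵒᵖ ⥤ Pointed.{0}) (n : ℕ) : hh K L Y n ⟶ hh K L' Y n :=
  HomologicalComplex.homologyMap
    ((AlgebraicTopology.alternatingFaceMapComplex (ModuleCat.{0} K)).map
      (CategoryTheory.Functor.whiskerLeft Y ((gammaToPointed.lan).map η))) n

/-- The map induced on `H_n(R̃(Y_•))` by a map of pointed simplicial sets `g : Y ⟶ Z`. -/
noncomputable def hhMapOfSimplicial (L : GammaCat ⥤ ModuleCat.{0} K)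
    {Y Z : SimplexCategoryᵒᵖ ⥤ Pointed.{0}} (g : Y ⟶ Z) (n : ℕ) :
    hh K L Y n ⟶ hh K L Z n :=
  HomologicalComplex.homologyMap
    ((AlgebraicTopology.alternatingFaceMapComplex (ModuleCat.{0} K)).map
      (CategoryTheory.Functor.whiskerRight g ((gammaToPointed.lan).obj L))) n

end HH

/-!
Induction on `k`, peeling off the point `1 ∈ [k]`. The chain `Σ φ t₍₀₎ m ⊗ ψ t₍₁₎ a₁ ⊗ ⋯`
is the coaction-convolution of `t ↦ ψ t₍₀₎ a₁` with the shorter chain for `a₂, …`, and the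
Loday map multiplies that first factor into slot `f(1)`. So everything reduces to one identity:
multiplying slot `j` of a chain by `ψ t₍₀₎ a₀` gives the chain with `a₀` multiplied into the
`j`-th argument. By coassociativity and cocommutativity the factor `ψ t₍₀₎ a₀` can be moved
next to the Sweedler factor sitting in slot `j`, where the measuring property of `ψ`
(for `j ≠ 0`) or the comodule measuring property of `φ` (for `j = 0`) absorbs it.
-/

lemma assoc_comp_rTensor_comp_lTensor {R C D E P Q : Type} [CommSemiring R]
    [AddCommMonoid C] [Module R C] [AddCommMonoid D] [Module R D] [AddCommMonoid E] [Module R E]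
    [AddCommMonoid P] [Module R P] [AddCommMonoid Q] [Module R Q]
    (g : C →ₗ[R] P ⊗[R] Q) (X : D →ₗ[R] E) :
    (TensorProduct.assoc R P Q E).toLinearMap ∘ₗ g.rTensor E ∘ₗ X.lTensor C =
      (X.lTensor Q).lTensor P ∘ₗ (TensorProduct.assoc R P Q D).toLinearMap ∘ₗ g.rTensor D := by
  rw [LinearMap.rTensor_comp_lTensor, ← LinearMap.lTensor_comp_rTensor, LinearMap.lTensor_tensor]
  ext c d
  simp

section Coaction

variable {K C D : Type} [Field K] [AddCommGroup C] [Module K C] [Coalgebra K C]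
  [AddCommGroup D] [Module K D]

lemma coactIter_succ_apply (ρ : CoactionStruct K C D) (k : ℕ) (t : D) :
    coactIter K C D ρ (k + 1) t = (coactIter K C D ρ k).lTensor C (ρ.δ t) := by
  induction k generalizing t with
  | zero => exact (LinearMap.congr_fun (LinearMap.lTensor_id C D) (ρ.δ t)).symm
  | succ k ih =>
    have natural := LinearMap.congr_fun
      (assoc_comp_rTensor_comp_lTensor Coalgebra.comul (coactIter K C D ρ k)) (ρ.δ t)
    have coassoc := LinearMap.congr_fun ρ.coassoc t
    simp only [LinearMap.comp_apply] at natural coassoc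
    -- `TD K C D (k + 1)` is only definitionally `C ⊗ TD K C D k`, which defeats `rw` here.
    exact (congrArg (fun x => TensorProduct.assoc K C C _
      ((Coalgebra.comul (R := K) (A := C)).rTensor _ x)) (ih t)).trans <|
        natural.trans <| (congrArg _ coassoc).trans <| by
          rw [← LinearMap.comp_apply (LinearMap.lTensor C _), ← LinearMap.lTensor_comp]
          exact congrArg (fun g => LinearMap.lTensor C g (ρ.δ t)) (LinearMap.ext ih).symm

end Coaction

section Convolution

variable {K C D : Type} [Field K] [AddCommGroup C] [Module K C] [Coalgebra K C]
  [AddCommGroup D] [Module K D]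
variable {E F G : Type} [AddCommGroup E] [Module K E] [AddCommGroup F] [Module K F]
  [AddCommGroup G] [Module K G]

/-- `convComp S R c x = Σ S c₍₁₎ (R c₍₂₎ x)`. -/
noncomputable def convComp (S : C →ₗ[K] F →ₗ[K] G) (R : C →ₗ[K] E →ₗ[K] F) :
    C →ₗ[K] E →ₗ[K] G :=
  TensorProduct.lift ((LinearMap.llcomp K E F G ∘ₗ S).compl₂ R) ∘ₗ Coalgebra.comul

lemma convComp_comm (hcocomm : IsCocommutative K C) {F' : Type} [AddCommGroup F']
    [Module K F'] {S : C →ₗ[K] F →ₗ[K] G} {R : C →ₗ[K] E →ₗ[K] F}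
    {R' : C →ₗ[K] F' →ₗ[K] G} {S' : C →ₗ[K] E →ₗ[K] F'}
    (h : ∀ c c' x, S c (R c' x) = R' c' (S' c x)) :
    convComp S R = convComp R' S' := by
  rw [convComp, convComp]
  nth_rewrite 1 [← hcocomm]
  rw [← LinearMap.comp_assoc]
  congr 1
  ext c c' x
  simpa using h c' c x

lemma IsMeasuring.convComp_comp_flip {A B : Type} [Ring A] [Algebra K A] [Ring B] [Algebra K B]
    {ψ : C →ₗ[K] A →ₗ[K] B} (hψ : IsMeasuring K A B C ψ)
    {U : B →ₗ[K] F →ₗ[K] G} {V : B →ₗ[K] E →ₗ[K] F} {W : B →ₗ[K] E →ₗ[K] G}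
    (h : ∀ b b' x, U b (V b' x) = W (b * b') x) (a a' : A) :
    convComp (U ∘ₗ ψ.flip a) (V ∘ₗ ψ.flip a') = W ∘ₗ ψ.flip (a * a') := by
  ext c x
  simp only [convComp, LinearMap.comp_apply, LinearMap.flip_apply, hψ.measures_mul]
  induction Coalgebra.comul (R := K) c using TensorProduct.induction_on with
  | zero => simp
  | tmul => simp [h]
  | add _ _ hx hy => simp only [map_add, LinearMap.add_apply, hx, hy]

namespace CoactionStruct

variable (ρ : CoactionStruct K C D)

/-- `ρ.conv S Q t = Σ S t₍₀₎ (Q t₍₁₎)`. -/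
noncomputable def conv (S : C →ₗ[K] E →ₗ[K] F) (Q : D →ₗ[K] E) : D →ₗ[K] F :=
  TensorProduct.lift (S.compl₂ Q) ∘ₗ ρ.δ

lemma comp_conv (S : C →ₗ[K] E →ₗ[K] F) (Q : D →ₗ[K] E) (g : F →ₗ[K] G) :
    g ∘ₗ ρ.conv S Q = ρ.conv (S.compr₂ g) Q := by
  rw [conv, conv, ← LinearMap.comp_assoc, ← TensorProduct.lift_compr₂]
  rfl

lemma conv_compl₂ (S : C →ₗ[K] F →ₗ[K] G) (g : E →ₗ[K] F) (Q : D →ₗ[K] E) :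
    ρ.conv (S.compl₂ g) Q = ρ.conv S (g ∘ₗ Q) :=
  rfl

lemma conv_conv (S : C →ₗ[K] F →ₗ[K] G) (R : C →ₗ[K] E →ₗ[K] F) (Q : D →ₗ[K] E) :
    ρ.conv S (ρ.conv R Q) = ρ.conv (convComp S R) Q := by
  set T := TensorProduct.lift
    ((LinearMap.llcomp K (C ⊗[K] D) F G).flip (TensorProduct.lift (R.compl₂ Q)) ∘ₗ S)
  have lift_eq : TensorProduct.lift (S.compl₂ (ρ.conv R Q)) = T ∘ₗ ρ.δ.lTensor C := by
    ext c d
    rfl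
  have assoc_eq : T ∘ₗ (TensorProduct.assoc K C C D).toLinearMap ∘ₗ
      (Coalgebra.comul (R := K) (A := C)).rTensor D =
        TensorProduct.lift ((convComp S R).compl₂ Q) := by
    ext c d
    simp only [LinearMap.comp_apply, AlgebraTensorModule.curry_apply, curry_apply,
      LinearMap.coe_restrictScalars, LinearMap.rTensor_tmul, TensorProduct.lift.tmul,
      LinearMap.compl₂_apply, convComp]
    induction Coalgebra.comul (R := K) c using TensorProduct.induction_on with
    | zero => simp
    | tmul => simp [T]
    | add _ _ hx hy => simp only [add_tmul, map_add, hx, hy, LinearMap.add_apply]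
  rw [conv, lift_eq, LinearMap.comp_assoc, ← ρ.coassoc, conv, ← assoc_eq]
  simp only [LinearMap.comp_assoc]

lemma conv_eq_comp_of_counit {S : C →ₗ[K] E →ₗ[K] F} {S₀ : E →ₗ[K] F}
    (h : ∀ c, S c = Coalgebra.counit (R := K) c • S₀) (Q : D →ₗ[K] E) :
    ρ.conv S Q = S₀ ∘ₗ Q := by
  have lift_eq : TensorProduct.lift (S.compl₂ Q) =
      S₀ ∘ₗ Q ∘ₗ (TensorProduct.lid K D).toLinearMap ∘ₗ
        (Coalgebra.counit (R := K) (A := C)).rTensor D := by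
    ext c d
    simp [h]
  rw [conv, lift_eq, LinearMap.comp_assoc, LinearMap.comp_assoc, LinearMap.comp_assoc,
    ρ.rTensor_counit_comp_coaction]
  ext t
  simp

end CoactionStruct

end Convolution

section TensorPower

noncomputable def PiTensorProduct.mulLeftAt {R B ι : Type} [CommSemiring R] [Semiring B]
    [Algebra R B] [DecidableEq ι] (i : ι) : B →ₗ[R] (⨂[R] _ : ι, B) →ₗ[R] ⨂[R] _ : ι, B :=
  (mapMultilinear R (fun _ : ι => B) (fun _ => B)).toLinearMap (fun _ => LinearMap.id) i ∘ₗ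
    LinearMap.mul R B

lemma PiTensorProduct.mulLeftAt_tprod {R B ι : Type} [CommSemiring R] [Semiring B]
    [Algebra R B] [DecidableEq ι] (i : ι) (b : B) (bs : ι → B) :
    mulLeftAt i b (PiTensorProduct.tprod R bs) =
      PiTensorProduct.tprod R (Function.update bs i (b * bs i)) := by
  simp only [mulLeftAt, LinearMap.comp_apply, MultilinearMap.toLinearMap_apply,
    mapMultilinear_apply, map_tprod]
  congr 1
  funext j
  rcases eq_or_ne j i with rfl | hj
  · simp
  · simp [hj]

lemma tprodCons_tprod {K B : Type} [Field K] [Ring B] [Algebra K B] (k : ℕ) (b : B)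
    (bs : Fin k → B) :
    tprodCons K B k b (PiTensorProduct.tprod K bs) = PiTensorProduct.tprod K (Fin.cons b bs) := by
  simp [tprodCons]

end TensorPower

section LodayOps

variable {K B N : Type} [Field K] [CommRing B] [Algebra K B] [AddCommGroup N] [Module K N]

lemma Lob.hom_ext {l : ℕ} {P : Type} [AddCommGroup P] [Module K P] {g h : Lob K B N l →ₗ[K] P}
    (H : ∀ n bs, g (n ⊗ₜ PiTensorProduct.tprod K bs) = h (n ⊗ₜ PiTensorProduct.tprod K bs)) :
    g = h := by
  ext n bs
  exact H n bs

variable (K B N) in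
noncomputable def lobCons (l : ℕ) : B →ₗ[K] Lob K B N l →ₗ[K] Lob K B N (l + 1) :=
  LinearMap.lTensorHom N ∘ₗ tprodCons K B l

lemma lobCons_tmul_tprod {l : ℕ} (b : B) (n : N) (bs : Fin l → B) :
    lobCons K B N l b (n ⊗ₜ PiTensorProduct.tprod K bs) =
      n ⊗ₜ PiTensorProduct.tprod K (Fin.cons b bs) := by
  simp [lobCons, tprodCons_tprod]

variable [Module B N] [IsScalarTower K B N] [SMulCommClass K B N]

variable (K B N) in
/-- Multiplication by `b` on the `j`-th factor of `N ⊗ B^{⊗l}`, counting `N` as factor `0`. -/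
noncomputable def lobMul (l : ℕ) (j : Fin (l + 1)) : B →ₗ[K] Lob K B N l →ₗ[K] Lob K B N l :=
  Fin.cases (LinearMap.rTensorHom _ ∘ₗ lsmulKB K B N)
    (fun i => LinearMap.lTensorHom N ∘ₗ PiTensorProduct.mulLeftAt i) j

lemma lobMul_zero_tmul {l : ℕ} (b : B) (n : N) (x : ⨂[K] _ : Fin l, B) :
    lobMul K B N l 0 b (n ⊗ₜ x) = (b • n) ⊗ₜ x :=
  rfl

lemma lobMul_succ_tmul_tprod {l : ℕ} (i : Fin l) (b : B) (n : N) (bs : Fin l → B) :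
    lobMul K B N l i.succ b (n ⊗ₜ PiTensorProduct.tprod K bs) =
      n ⊗ₜ PiTensorProduct.tprod K (Function.update bs i (b * bs i)) := by
  simp [lobMul, PiTensorProduct.mulLeftAt_tprod]

lemma lobMul_one {l : ℕ} (j : Fin (l + 1)) (x : Lob K B N l) : lobMul K B N l j 1 x = x := by
  suffices h : lobMul K B N l j 1 = LinearMap.id from LinearMap.congr_fun h x
  refine Lob.hom_ext fun n bs => ?_
  cases j using Fin.cases with
  | zero => rw [lobMul_zero_tmul, one_smul, LinearMap.id_apply]
  | succ i => rw [lobMul_succ_tmul_tprod, one_mul, Function.update_eq_self, LinearMap.id_apply]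

lemma lobMul_one_lobCons {l : ℕ} (b b' : B) (x : Lob K B N l) :
    lobMul K B N (l + 1) 1 b (lobCons K B N l b' x) = lobCons K B N l (b * b') x := by
  suffices h : lobMul K B N (l + 1) 1 b ∘ₗ lobCons K B N l b' = lobCons K B N l (b * b') from
    LinearMap.congr_fun h x
  refine Lob.hom_ext fun n bs => ?_
  simp only [LinearMap.comp_apply, lobCons_tmul_tprod]
  rw [← Fin.succ_zero_eq_one, lobMul_succ_tmul_tprod, Fin.update_cons_zero, Fin.cons_zero]

lemma lobMul_succAbove_lobCons {l : ℕ} (j : Fin (l + 1)) (b b' : B) (x : Lob K B N l) :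
    lobMul K B N (l + 1) ((1 : Fin (l + 2)).succAbove j) b (lobCons K B N l b' x) =
      lobCons K B N l b' (lobMul K B N l j b x) := by
  suffices h : lobMul K B N (l + 1) ((1 : Fin (l + 2)).succAbove j) b ∘ₗ lobCons K B N l b' =
      lobCons K B N l b' ∘ₗ lobMul K B N l j b from LinearMap.congr_fun h x
  refine Lob.hom_ext fun n bs => ?_
  simp only [LinearMap.comp_apply]
  cases j using Fin.cases with
  | zero => rw [Fin.one_succAbove_zero, lobCons_tmul_tprod, lobMul_zero_tmul, lobMul_zero_tmul,
      lobCons_tmul_tprod]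
  | succ i => rw [Fin.one_succAbove_succ, lobCons_tmul_tprod, lobMul_succ_tmul_tprod,
      lobMul_succ_tmul_tprod, lobCons_tmul_tprod, Fin.cons_succ, Fin.cons_update]

noncomputable def lobTmul {l : ℕ} (n : N) (Q : Fin (l + 1) → B) : Lob K B N l :=
  (Q 0 • n) ⊗ₜ PiTensorProduct.tprod K (Fin.tail Q)

lemma lobMul_lobTmul {l : ℕ} (j : Fin (l + 1)) (b : B) (n : N) (Q : Fin (l + 1) → B) :
    lobMul K B N l j b (lobTmul n Q) = lobTmul n (Function.update Q j (b * Q j)) := by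
  cases j using Fin.cases with
  | zero => rw [lobTmul, lobTmul, lobMul_zero_tmul, Function.update_self, Fin.tail_update_zero,
      mul_smul]
  | succ i =>
    rw [lobTmul, lobTmul, lobMul_succ_tmul_tprod, Function.update_of_ne (Fin.succ_ne_zero i).symm,
      Fin.tail_update_succ]
    rfl

end LodayOps

namespace GammaHom

variable {k l : ℕ}

def tail (f : GammaHom (k + 1) l) : GammaHom k l :=
  ⟨f.toFun ∘ (1 : Fin (k + 2)).succAbove, f.map_zero⟩

@[simp]
lemma tail_toFun_succ (f : GammaHom (k + 1) l) (i : Fin k) :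
    f.tail.toFun i.succ = f.toFun i.succ.succ := by
  simp [tail]

/-- `f.fiberProd g p = ∏_{i ∈ f⁻¹(p), i ≠ 0} gᵢ`, where `i : Fin k` stands for `i + 1 ∈ [k]`. -/
def fiberProd {γ : Type} [CommMonoid γ] (f : GammaHom k l) (g : Fin k → γ) (p : Fin (l + 1)) :
    γ :=
  ∏ i ∈ Finset.univ.filter fun i => f.toFun i.succ = p, g i

lemma fiberProd_of_zero {γ : Type} [CommMonoid γ] (f : GammaHom 0 l) (g : Fin 0 → γ) :
    f.fiberProd g = 1 :=
  funext fun _ => Finset.prod_of_isEmpty _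

lemma fiberProd_cons {γ : Type} [CommMonoid γ] (f : GammaHom (k + 1) l) (g₀ : γ)
    (g : Fin k → γ) :
    f.fiberProd (Fin.cons g₀ g) =
      Function.update (f.tail.fiberProd g) (f.toFun 1) (g₀ * f.tail.fiberProd g (f.toFun 1)) := by
  funext p
  rcases eq_or_ne p (f.toFun 1) with rfl | hp
  · simp [fiberProd, Finset.prod_filter, Fin.prod_univ_succ]
  · simp [fiberProd, Finset.prod_filter, Fin.prod_univ_succ, hp, Ne.symm hp]

end GammaHom

section LodayMap

variable {K B N : Type} [Field K] [CommRing B] [Algebra K B] [AddCommGroup N] [Module K N]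
  [Module B N]

lemma lodayElt_eq_lobTmul {k l : ℕ} (f : GammaHom k l) (n : N) (b : Fin k → B) :
    lodayElt K B N f n b = lobTmul n (f.fiberProd b) :=
  rfl

variable [IsScalarTower K B N] [SMulCommClass K B N]

lemma lodayElt_cons {k l : ℕ} (f : GammaHom (k + 1) l) (n : N) (b₀ : B) (b : Fin k → B) :
    lodayElt K B N f n (Fin.cons b₀ b) =
      lobMul K B N l (f.toFun 1) b₀ (lodayElt K B N f.tail n b) := by
  rw [lodayElt_eq_lobTmul, lodayElt_eq_lobTmul, lobMul_lobTmul, GammaHom.fiberProd_cons]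

def IsLodayMap {k l : ℕ} (f : GammaHom k l) (G : Lob K B N k →ₗ[K] Lob K B N l) : Prop :=
  ∀ n b, G (n ⊗ₜ PiTensorProduct.tprod K b) = lodayElt K B N f n b

variable {k l : ℕ} {f : GammaHom (k + 1) l} {G : Lob K B N (k + 1) →ₗ[K] Lob K B N l}

lemma IsLodayMap.comp_lobCons_one (hG : IsLodayMap f G) :
    IsLodayMap f.tail (G ∘ₗ lobCons K B N k 1) := by
  intro n b
  rw [LinearMap.comp_apply, lobCons_tmul_tprod, hG, lodayElt_cons, lobMul_one]

lemma IsLodayMap.comp_lobCons (hG : IsLodayMap f G) (b₀ : B) :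
    G ∘ₗ lobCons K B N k b₀ = lobMul K B N l (f.toFun 1) b₀ ∘ₗ G ∘ₗ lobCons K B N k 1 :=
  Lob.hom_ext fun n b => by
    rw [LinearMap.comp_apply, LinearMap.comp_apply, ← LinearMap.comp_apply G,
      hG.comp_lobCons_one, LinearMap.comp_apply, lobCons_tmul_tprod, hG, lodayElt_cons]

end LodayMap

section MeasuringChain

variable {K A B C D M N : Type} [Field K] [CommRing A] [Algebra K A] [CommRing B] [Algebra K B]
  [AddCommGroup C] [Module K C] [AddCommGroup D] [Module K D]
  [AddCommGroup M] [Module K M] [AddCommGroup N] [Module K N]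
variable {ψ : C →ₗ[K] A →ₗ[K] B} {φ : D →ₗ[K] M →ₗ[K] N}

lemma measurePair_succ_tmul (l : ℕ) (m : M) (a : Fin (l + 1) → A) (c : C) (x : TD K C D l) :
    measurePair K A B C D M N ψ φ (l + 1) m a (c ⊗ₜ[K] x : C ⊗[K] TD K C D l) =
      lobCons K B N l (ψ c (a 0)) (measurePair K A B C D M N ψ φ l m (Fin.tail a) x) :=
  rfl

variable [Coalgebra K C]

variable (ψ φ) in
/-- `measuringChain ψ φ ρ l m a t = Σ φ t₍₀₎ m ⊗ ψ t₍₁₎ a₁ ⊗ ⋯ ⊗ ψ t₍ₗ₎ aₗ`. -/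
noncomputable def measuringChain (ρ : CoactionStruct K C D) (l : ℕ) (m : M) (a : Fin l → A) :
    D →ₗ[K] Lob K B N l :=
  measurePair K A B C D M N ψ φ l m a ∘ₗ coactIter K C D ρ l

variable {ρ : CoactionStruct K C D}

lemma measuringChain_zero (m : M) (a : Fin 0 → A) (t : D) :
    measuringChain ψ φ ρ 0 m a t = φ t m ⊗ₜ PiTensorProduct.tprod K 1 :=
  rfl

lemma measuringChain_succ (l : ℕ) (m : M) (a : Fin (l + 1) → A) :
    measuringChain ψ φ ρ (l + 1) m a =
      ρ.conv (lobCons K B N l ∘ₗ ψ.flip (a 0)) (measuringChain ψ φ ρ l m (Fin.tail a)) := by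
  have lTensor_eq : measurePair K A B C D M N ψ φ (l + 1) m a ∘ₗ
      ((coactIter K C D ρ l).lTensor C : C ⊗[K] D →ₗ[K] TD K C D (l + 1)) =
        TensorProduct.lift ((lobCons K B N l ∘ₗ ψ.flip (a 0)).compl₂
          (measuringChain ψ φ ρ l m (Fin.tail a))) :=
    TensorProduct.ext' fun c d => measurePair_succ_tmul l m a c _
  ext t
  exact (congrArg _ (coactIter_succ_apply ρ l t)).trans (LinearMap.congr_fun lTensor_eq (ρ.δ t))

lemma measuringChain_one (hψ : IsMeasuring K A B C ψ) (l : ℕ) (m : M) (t : D) :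
    measuringChain ψ φ ρ l m 1 t = φ t m ⊗ₜ PiTensorProduct.tprod K 1 := by
  induction l generalizing t with
  | zero => rfl
  | succ l ih =>
    have counit (c : C) : (lobCons K B N l ∘ₗ ψ.flip 1) c =
        Coalgebra.counit (R := K) c • lobCons K B N l 1 := by
      simp [hψ.measures_one]
    rw [measuringChain_succ, Pi.one_apply, ρ.conv_eq_comp_of_counit counit, LinearMap.comp_apply,
      show Fin.tail (1 : Fin (l + 1) → A) = 1 from rfl, ih, lobCons_tmul_tprod]
    exact congrArg (_ ⊗ₜ PiTensorProduct.tprod K ·) (Fin.cons_self_tail 1)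

variable [Module B N] [IsScalarTower K B N] [SMulCommClass K B N]

lemma conv_lobMul_succAbove_measuringChain_succ (hcocomm : IsCocommutative K C) {l : ℕ}
    (j : Fin (l + 1)) (a₀ : A) (m : M) (a : Fin (l + 1) → A) :
    ρ.conv (lobMul K B N (l + 1) ((1 : Fin (l + 2)).succAbove j) ∘ₗ ψ.flip a₀)
        (measuringChain ψ φ ρ (l + 1) m a) =
      ρ.conv (lobCons K B N l ∘ₗ ψ.flip (a 0))
        (ρ.conv (lobMul K B N l j ∘ₗ ψ.flip a₀) (measuringChain ψ φ ρ l m (Fin.tail a))) := by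
  rw [measuringChain_succ, ρ.conv_conv, ρ.conv_conv,
    convComp_comm (R' := lobCons K B N l ∘ₗ ψ.flip (a 0)) (S' := lobMul K B N l j ∘ₗ ψ.flip a₀)
      hcocomm fun _ _ x => lobMul_succAbove_lobCons j _ _ x]

lemma conv_lobMul_succ_measuringChain (hψ : IsMeasuring K A B C ψ)
    (hcocomm : IsCocommutative K C) {l : ℕ} (i : Fin l) (a₀ : A) (m : M) (a : Fin l → A) :
    ρ.conv (lobMul K B N l i.succ ∘ₗ ψ.flip a₀) (measuringChain ψ φ ρ l m a) =
      measuringChain ψ φ ρ l m (Function.update a i (a₀ * a i)) := by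
  induction l with
  | zero => exact i.elim0
  | succ l ih =>
    cases i using Fin.cases with
    | zero =>
      rw [measuringChain_succ, ρ.conv_conv, Fin.succ_zero_eq_one,
        hψ.convComp_comp_flip fun b b' x => lobMul_one_lobCons b b' x, measuringChain_succ,
        Function.update_self, Fin.tail_update_zero]
    | succ i =>
      have step := conv_lobMul_succAbove_measuringChain_succ (ψ := ψ) (φ := φ) (ρ := ρ)
        hcocomm i.succ a₀ m a
      rw [Fin.one_succAbove_succ] at step
      rw [step, ih, measuringChain_succ, Function.update_of_ne (Fin.succ_ne_zero i).symm,
        Fin.tail_update_succ]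
      rfl

variable [Module A M]

lemma conv_lobMul_zero_measuringChain (hcocomm : IsCocommutative K C)
    (hφ : IsComodMeasuring K A B C D M N ψ ρ φ) {l : ℕ} (a₀ : A) (m : M) (a : Fin l → A) :
    ρ.conv (lobMul K B N l 0 ∘ₗ ψ.flip a₀) (measuringChain ψ φ ρ l m a) =
      measuringChain ψ φ ρ l (a₀ • m) a := by
  induction l with
  | zero =>
    have bilin_eq : (lobMul K B N 0 0 ∘ₗ ψ.flip a₀).compl₂ (measuringChain ψ φ ρ 0 m a) =
        ((lsmulKB K B N).compl₁₂ (ψ.flip a₀) (φ.flip m)).compr₂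
          ((TensorProduct.mk K N _).flip (PiTensorProduct.tprod K 1)) :=
      rfl
    ext t
    rw [CoactionStruct.conv, bilin_eq, TensorProduct.lift_compr₂, measuringChain_zero,
      hφ.measures]
    rfl
  | succ l ih =>
    have step := conv_lobMul_succAbove_measuringChain_succ (ψ := ψ) (φ := φ) (ρ := ρ)
      hcocomm 0 a₀ m a
    rw [Fin.one_succAbove_zero] at step
    rw [step, ih, ← measuringChain_succ]

/-- The tuple `P` carries the scalar `P 0` for `m` together with the arguments `P 1, …, P l`. -/
lemma conv_lobMul_measuringChain (hψ : IsMeasuring K A B C ψ) (hcocomm : IsCocommutative K C)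
    (hφ : IsComodMeasuring K A B C D M N ψ ρ φ) {l : ℕ} (j : Fin (l + 1)) (a₀ : A) (m : M)
    (P : Fin (l + 1) → A) :
    ρ.conv (lobMul K B N l j ∘ₗ ψ.flip a₀) (measuringChain ψ φ ρ l (P 0 • m) (Fin.tail P)) =
      measuringChain ψ φ ρ l ((Function.update P j (a₀ * P j)) 0 • m)
        (Fin.tail (Function.update P j (a₀ * P j))) := by
  cases j using Fin.cases with
  | zero => rw [conv_lobMul_zero_measuringChain hcocomm hφ, Function.update_self,
      Fin.tail_update_zero, mul_smul]
  | succ i =>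
    rw [conv_lobMul_succ_measuringChain hψ hcocomm,
      Function.update_of_ne (Fin.succ_ne_zero i).symm, Fin.tail_update_succ]
    rfl

theorem IsLodayMap.comp_measuringChain (hψ : IsMeasuring K A B C ψ)
    (hcocomm : IsCocommutative K C) (hφ : IsComodMeasuring K A B C D M N ψ ρ φ) {k l : ℕ}
    {f : GammaHom k l} {G : Lob K B N k →ₗ[K] Lob K B N l} (hG : IsLodayMap f G) (m : M)
    (a : Fin k → A) :
    G ∘ₗ measuringChain ψ φ ρ k m a =
      measuringChain ψ φ ρ l (f.fiberProd a 0 • m) (Fin.tail (f.fiberProd a)) := by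
  induction k with
  | zero =>
    ext t
    rw [LinearMap.comp_apply, measuringChain_zero, hG, lodayElt_eq_lobTmul,
      f.fiberProd_of_zero, f.fiberProd_of_zero, lobTmul, Pi.one_apply, Pi.one_apply, one_smul,
      one_smul]
    exact (measuringChain_one hψ l m t).symm
  | succ k ih =>
    have lobCons_eq : (lobCons K B N k ∘ₗ ψ.flip (a 0)).compr₂ G =
        (lobMul K B N l (f.toFun 1) ∘ₗ ψ.flip (a 0)).compl₂ (G ∘ₗ lobCons K B N k 1) :=
      LinearMap.ext₂ fun _ x => LinearMap.congr_fun (hG.comp_lobCons _) x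
    have fiberProd_eq := f.fiberProd_cons (a 0) (Fin.tail a)
    rw [Fin.cons_self_tail] at fiberProd_eq
    rw [measuringChain_succ, ρ.comp_conv, lobCons_eq, ρ.conv_compl₂,
      ih hG.comp_lobCons_one, conv_lobMul_measuringChain hψ hcocomm hφ, fiberProd_eq]

end MeasuringChain

/-- the key computation in Lemma 2.2. With `ψ` a cocommutative
measuring between commutative algebras and `φ` a `C`-comodule measuring relative to `ψ`,
let `f : [k] → [l]` be a pointed map and let `G = L(B,N)(f)` be the Loday map for
`(B,N)` (the linear map acting by the Loday fiber-product formula on pure tensors).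
Then for all `t ∈ D`, `m ∈ M`, `a₁,…,aₖ ∈ A`:
`Σ (φ t₍₀₎ m · ∏_{i ∈ f⁻¹(0), i≠0} ψ t₍ᵢ₎ aᵢ) ⊗ (∏_{i ∈ f⁻¹(1)} ψ t₍ᵢ₎ aᵢ) ⊗ ⋯ ⊗ (∏_{i ∈ f⁻¹(l)} ψ t₍ᵢ₎ aᵢ)`
(i.e. `G` applied to `Σ φ t₍₀₎ m ⊗ ψ t₍₁₎ a₁ ⊗ ⋯ ⊗ ψ t₍ₖ₎ aₖ`) equals
`Σ φ t₍₀₎ (m · ∏_{i ∈ f⁻¹(0), i≠0} aᵢ) ⊗ ψ t₍₁₎ (∏_{i ∈ f⁻¹(1)} aᵢ) ⊗ ⋯ ⊗ ψ t₍ₗ₎ (∏_{i ∈ f⁻¹(l)} aᵢ)`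
in `N ⊗ B^{⊗l}`. -/
theorem measuring_loday_compatible (K A B C D M N : Type) [Field K]
    [CommRing A] [Algebra K A] [CommRing B] [Algebra K B]
    [AddCommGroup C] [Module K C] [Coalgebra K C]
    [AddCommGroup D] [Module K D]
    [AddCommGroup M] [Module K M] [Module A M] [IsScalarTower K A M] [SMulCommClass K A M]
    [AddCommGroup N] [Module K N] [Module B N] [IsScalarTower K B N] [SMulCommClass K B N]
    (ψ : C →ₗ[K] A →ₗ[K] B) (hψ : IsMeasuring K A B C ψ)
    (hcocomm : IsCocommutative K C)
    (ρ : CoactionStruct K C D) (φ : D →ₗ[K] M →ₗ[K] N)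
    (hφ : IsComodMeasuring K A B C D M N ψ ρ φ)
    (k l : ℕ) (f : GammaHom k l)
    (G : Lob K B N k →ₗ[K] Lob K B N l)
    (hG : ∀ (n : N) (b : Fin k → B), G (n ⊗ₜ[K] tprod K b) = lodayElt K B N f n b)
    (t : D) (m : M) (a : Fin k → A) :
    G (measurePair K A B C D M N ψ φ k m a (coactIter K C D ρ k t)) =
      measurePair K A B C D M N ψ φ l ((∏ i ∈ fiber0 f, a i) • m)
        (fun j => ∏ i ∈ fiber f j, a i) (coactIter K C D ρ l t) :=
  LinearMap.congr_fun (IsLodayMap.comp_measuringChain hψ hcocomm hφ hG m a) t
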